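/- arXiv:2402.12584 — 7 statements merged into one kernel-verified Lean document; each statement's English description precedes it below -/
import Mathlib

section
/- For integers 0 ≤ r ≤ c and 1 ≤ x ≤ c, the sum ∑_{t=1}^{r-1} t·C(r, t+1)·C(c−r, x−t−1) equals r·C(c−1, x−1) + C(c−r, x) − C(c, x). -/
/-- Binomial coefficient `C(a,b)` on integers, with the convention that it is
zero when `b < 0` or `b > a`. -/
def ch (a b : ℤ) : ℤ := if 0 ≤ b ∧ b ≤ a then ((a.toNat).choose b.toNat : ℤ) else 0

/-! With `c = r + n` and `i = t + 1`, the sum is `∑ᵢ (i - 1) C(r,i) C(n,x-i)` without its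
`i = 0` term `-C(n,x)`. Splitting `i - 1`, the part `∑ᵢ C(r,i) C(n,x-i)` is `C(c,x)` by
Vandermonde, and the part `∑ᵢ i C(r,i) C(n,x-i)` is `r C(c-1,x-1)` by absorption
`i C(r,i) = r C(r-1,i-1)` followed by Vandermonde. -/

open Finset

lemma ch_natCast (a b : ℕ) : ch a b = a.choose b := by
  unfold ch
  split_ifs with h
  · simp
  · rw [Nat.choose_eq_zero_of_lt (by omega), Nat.cast_zero]

lemma ch_of_neg {a b : ℤ} (hb : b < 0) : ch a b = 0 :=
  if_neg fun h ↦ by omega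

lemma ch_natCast_sub_natCast (a k t : ℕ) :
    ch a ((k : ℤ) - t) = if t ≤ k then (a.choose (k - t) : ℤ) else 0 := by
  split_ifs with h
  · rw [← Nat.cast_sub h, ch_natCast]
  · exact ch_of_neg (by omega)

lemma sum_range_eq_sum_range_of_eq_zero {M : Type*} [AddCommMonoid M] {f : ℕ → M} {a b : ℕ}
    (ha : ∀ i ≥ a, f i = 0) (hb : ∀ i ≥ b, f i = 0) :
    ∑ i ∈ range a, f i = ∑ i ∈ range b, f i := by
  rcases le_total a b with h | h
  · exact (eventually_constant_sum ha h).symm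
  · exact eventually_constant_sum hb h

theorem Nat.sum_antidiagonal_mul_choose_mul_choose (m n k : ℕ) :
    ∑ ij ∈ antidiagonal (k + 1), ij.1 * (m + 1).choose ij.1 * n.choose ij.2
      = (m + 1) * (m + n).choose k := by
  have absorb (i : ℕ) : (i + 1) * (m + 1).choose (i + 1) = (m + 1) * m.choose i := by
    rw [Nat.add_one_mul_choose_eq, mul_comm]
  rw [Nat.sum_antidiagonal_succ, zero_mul, zero_mul, zero_add, Nat.add_choose_eq, mul_sum]
  simp only [absorb, mul_assoc]

theorem Nat.sum_antidiagonal_mul_choose_succ_mul_choose (m n k : ℕ) :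
    ∑ ij ∈ antidiagonal k, (ij.1 : ℤ) * (m + 1).choose (ij.1 + 1) * n.choose ij.2
      = (m + 1) * (m + n).choose k + n.choose (k + 1) - (m + 1 + n).choose (k + 1) := by
  have weighted := congrArg (Nat.cast (R := ℤ)) (sum_antidiagonal_mul_choose_mul_choose m n k)
  have vandermonde := congrArg (Nat.cast (R := ℤ)) (add_choose_eq (m + 1) n (k + 1))
  push_cast at weighted vandermonde
  calc ∑ ij ∈ antidiagonal k, (ij.1 : ℤ) * (m + 1).choose (ij.1 + 1) * n.choose ij.2
      = ∑ ij ∈ antidiagonal (k + 1), ((ij.1 : ℤ) - 1) * (m + 1).choose ij.1 * n.choose ij.2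
          + n.choose (k + 1) := by
        rw [Nat.sum_antidiagonal_succ]
        simp
    _ = _ := by
        simp only [sub_mul, one_mul, sum_sub_distrib, weighted, vandermonde]
        ring

theorem sum_choose_identity_general (r c x : ℕ) (hrc : r ≤ c) (hx1 : 1 ≤ x) :
    ∑ t ∈ Finset.Icc 1 (r - 1),
      (t : ℤ) * ch (r : ℤ) ((t : ℤ) + 1) * ch ((c : ℤ) - r) ((x : ℤ) - t - 1)
    = (r : ℤ) * ch ((c : ℤ) - 1) ((x : ℤ) - 1) + ch ((c : ℤ) - r) (x : ℤ)
      - ch (c : ℤ) (x : ℤ) := by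
  obtain ⟨n, rfl⟩ := Nat.exists_eq_add_of_le hrc
  obtain ⟨k, rfl⟩ := Nat.exists_eq_add_of_le' hx1
  rcases r with _ | m
  · simp
  have hc : ((m + 1 + n : ℕ) : ℤ) - 1 = (m + n : ℕ) := by push_cast; ring
  have hn : ((m + 1 + n : ℕ) : ℤ) - (m + 1 : ℕ) = n := by push_cast; ring
  have hx : ((k + 1 : ℕ) : ℤ) - 1 = k := by push_cast; ring
  have hk (t : ℕ) : ((k + 1 : ℕ) : ℤ) - t - 1 = k - t := by push_cast; ring
  simp only [hc, hn, hx, hk, ← Nat.cast_add_one, ch_natCast, ch_natCast_sub_natCast,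
    Nat.add_sub_cancel]
  set f : ℕ → ℤ := fun t ↦
    t * (m + 1).choose (t + 1) * if t ≤ k then (n.choose (k - t) : ℤ) else 0
  calc ∑ t ∈ Icc 1 m, f t
      = ∑ t ∈ range (m + 1), f t := by
        rw [sum_range_eq_add_Ico _ (by omega), Ico_add_one_right_eq_Icc]; simp [f]
    _ = ∑ t ∈ range (k + 1), f t := by
        refine sum_range_eq_sum_range_of_eq_zero (fun t ht ↦ ?_) (fun t ht ↦ ?_)
        · simp [f, Nat.choose_eq_zero_of_lt (show m + 1 < t + 1 by omega)]
        · simp [f, show ¬t ≤ k by omega]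
    _ = ∑ ij ∈ antidiagonal k, (ij.1 : ℤ) * (m + 1).choose (ij.1 + 1) * n.choose ij.2 := by
        rw [Nat.sum_antidiagonal_eq_sum_range_succ_mk]
        exact sum_congr rfl fun t ht ↦ by simp [f, Nat.lt_succ_iff.mp (mem_range.mp ht)]
    _ = _ := by
        rw [Nat.sum_antidiagonal_mul_choose_succ_mul_choose]
        push_cast; ring

/-- For `0 ≤ r ≤ c` and `1 ≤ x ≤ c`,
the sum `∑_{t=1}^{r-1} t·C(r,t+1)·C(c-r,x-t-1)` equals
`r·C(c-1,x-1) + C(c-r,x) - C(c,x)`. -/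
theorem sum_choose_identity (r c x : ℕ) (hrc : r ≤ c) (hx1 : 1 ≤ x) (hxc : x ≤ c) :
    ∑ t ∈ Finset.Icc 1 (r - 1),
      (t : ℤ) * ch (r : ℤ) ((t : ℤ) + 1) * ch ((c : ℤ) - r) ((x : ℤ) - t - 1)
    = (r : ℤ) * ch ((c : ℤ) - 1) ((x : ℤ) - 1) + ch ((c : ℤ) - r) (x : ℤ)
      - ch (c : ℤ) (x : ℤ) :=
  sum_choose_identity_general r c x hrc hx1
end

section
/- For integers 0 ≤ r ≤ c and 1 ≤ x ≤ c, the sum ∑_{t=1}^{r-1} t²·C(r, t+1)·C(c−r, x−t−1) equals r(r−1)·C(c−2, x−2) − r·C(c−1, x−1) − C(c−r, x) + C(c, x). -/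
open Finset

lemma ch_of_lt {a b : ℤ} (h : a < b) : ch a b = 0 :=
  if_neg fun h' => by omega

lemma sum_range_ch_mul_ch (m n : ℕ) (k : ℤ) :
    ∑ j ∈ range (m + 1), ch m j * ch n (k - j) = ch (m + n) k := by
  rcases lt_or_ge k 0 with hk | hk
  · rw [ch_of_neg hk]
    exact sum_eq_zero fun j _ => mul_eq_zero_of_right _ (ch_of_neg (by omega))
  lift k to ℕ using hk
  have hextend : ∑ j ∈ range (m + 1), ch m j * ch n (k - j)
      = ∑ j ∈ range (m + k + 1), ch m j * ch n (k - j) :=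
    sum_subset (range_subset_range.2 (by omega)) fun j _ hj => by
      rw [ch_of_lt (by simp at hj; omega), zero_mul]
  rw [hextend, ← Nat.cast_add, ch_natCast, Nat.add_choose_eq,
    Nat.sum_antidiagonal_eq_sum_range_succ_mk, Nat.cast_sum]
  symm
  refine sum_subset_zero_on_sdiff (range_subset_range.2 (by omega)) (fun j hj => ?_) fun j hj => ?_
  · simp only [mem_sdiff, mem_range] at hj
    exact mul_eq_zero_of_right _ (ch_of_neg (by omega))
  · rw [mem_range] at hj
    rw [← Nat.cast_sub (by omega), ch_natCast, ch_natCast, Nat.cast_mul]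

lemma sum_range_ch_sub_mul_ch (m n d : ℕ) (k : ℤ) :
    ∑ u ∈ range (m + d + 1), ch m (u - d) * ch n (k - u) = ch (m + n) (k - d) := by
  induction d generalizing k with
  | zero => simpa using sum_range_ch_mul_ch m n k
  | succ d ih =>
    rw [← add_assoc, sum_range_succ', ch_of_neg (by omega), zero_mul, add_zero]
    convert ih (k - 1) using 1
    · exact sum_congr rfl fun u _ => by push_cast; ring_nf
    · push_cast; ring_nf

lemma descFactorial_mul_choose (r u d : ℕ) (h : d ≤ u) :
    u.descFactorial d * r.choose u = r.descFactorial d * (r - d).choose (u - d) := by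
  rw [Nat.descFactorial_eq_factorial_mul_choose, Nat.descFactorial_eq_factorial_mul_choose,
    mul_assoc, mul_assoc, mul_comm (u.choose d), Nat.choose_mul h]

lemma descFactorial_mul_ch (r u d : ℕ) :
    (u.descFactorial d : ℤ) * ch r u = r.descFactorial d * ch (r - d) (u - d) := by
  rcases lt_or_ge u d with hud | hdu
  · rw [Nat.descFactorial_eq_zero_iff_lt.2 hud, ch_of_neg (b := (u : ℤ) - d) (by omega)]
    simp
  rcases lt_or_ge r d with hrd | hdr
  · rw [Nat.descFactorial_eq_zero_iff_lt.2 hrd, ch_of_lt (by omega)]; simp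
  rw [← Nat.cast_sub hdr, ← Nat.cast_sub hdu, ch_natCast, ch_natCast]
  exact_mod_cast descFactorial_mul_choose r u d hdu

lemma sum_range_descFactorial_mul_ch_mul_ch (r n d : ℕ) (k : ℤ) :
    ∑ u ∈ range (r + 1), (u.descFactorial d : ℤ) * (ch r u * ch n (k - u))
      = r.descFactorial d * ch (r + n - d) (k - d) := by
  simp_rw [← mul_assoc, descFactorial_mul_ch, mul_assoc, ← mul_sum]
  rcases lt_or_ge r d with hrd | hdr
  · simp [Nat.descFactorial_eq_zero_iff_lt.2 hrd]
  obtain ⟨m, rfl⟩ := Nat.exists_eq_add_of_le' hdr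
  convert congrArg (_ * ·) (sum_range_ch_sub_mul_ch m n d k) using 4 <;> push_cast <;> ring_nf

lemma sum_range_sub_one_sq_mul_ch_mul_ch (r n : ℕ) (k : ℤ) :
    ∑ u ∈ range (r + 1), ((u : ℤ) - 1) ^ 2 * (ch r u * ch n (k - u))
      = r * (r - 1) * ch (r + n - 2) (k - 2) - r * ch (r + n - 1) (k - 1) + ch (r + n) k := by
  have hsq (u : ℕ) : ((u : ℤ) - 1) ^ 2
      = u.descFactorial 2 - u.descFactorial 1 + u.descFactorial 0 := by
    simp only [Nat.cast_descFactorial_two, Nat.descFactorial_one, Nat.descFactorial_zero,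
      Nat.cast_one]
    ring
  simp only [hsq, sub_mul, add_mul, sum_add_distrib, sum_sub_distrib,
    sum_range_descFactorial_mul_ch_mul_ch]
  simp only [Nat.cast_descFactorial_two, Nat.descFactorial_one, Nat.descFactorial_zero,
    Nat.cast_ofNat, Nat.cast_one, Nat.cast_zero, sub_zero, one_mul]

lemma sum_Icc_sq_mul_succ {R : Type*} [CommRing R] (r : ℕ) (f : ℕ → R) :
    ∑ t ∈ Icc 1 (r - 1), (t : R) ^ 2 * f (t + 1)
      = ∑ u ∈ range (r + 1), ((u : R) - 1) ^ 2 * f u - f 0 := by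
  rw [sum_range_succ']
  simp only [Nat.cast_add, Nat.cast_one, add_sub_cancel_right, Nat.cast_zero, zero_sub]
  rw [neg_one_sq, one_mul, add_sub_cancel_right]
  refine sum_subset (fun t ht => ?_) fun t ht ht' => ?_
  · simp only [mem_Icc, mem_range] at ht ⊢; omega
  · obtain rfl : t = 0 := by simp only [mem_Icc, mem_range] at ht ht'; omega
    simp

theorem sum_sq_choose_identity_general (r c x : ℕ) (hrc : r ≤ c) :
    ∑ t ∈ Finset.Icc 1 (r - 1),
      (t : ℤ) ^ 2 * ch (r : ℤ) ((t : ℤ) + 1) * ch ((c : ℤ) - r) ((x : ℤ) - t - 1)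
    = (r : ℤ) * ((r : ℤ) - 1) * ch ((c : ℤ) - 2) ((x : ℤ) - 2)
      - (r : ℤ) * ch ((c : ℤ) - 1) ((x : ℤ) - 1)
      - ch ((c : ℤ) - r) (x : ℤ) + ch (c : ℤ) (x : ℤ) := by
  obtain ⟨s, rfl⟩ := Nat.exists_eq_add_of_le hrc
  have hsummand : ∀ t : ℕ, (t : ℤ) ^ 2 * ch r (t + 1) * ch ((r + s : ℕ) - r) (x - t - 1)
      = t ^ 2 * (ch r ↑(t + 1) * ch s (x - ↑(t + 1))) := by
    intro t; push_cast; ring_nf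
  simp only [hsummand]
  rw [sum_Icc_sq_mul_succ r fun u => ch r u * ch s (x - u), sum_range_sub_one_sq_mul_ch_mul_ch,
    ch_natCast r 0, Nat.choose_zero_right]
  push_cast
  ring_nf

/-- For `0 ≤ r ≤ c` and `1 ≤ x ≤ c`,
the sum `∑_{t=1}^{r-1} t²·C(r,t+1)·C(c-r,x-t-1)` equals
`r(r-1)·C(c-2,x-2) - r·C(c-1,x-1) - C(c-r,x) + C(c,x)`. -/
theorem sum_sq_choose_identity (r c x : ℕ) (hrc : r ≤ c) (hx1 : 1 ≤ x) (hxc : x ≤ c) :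
    ∑ t ∈ Finset.Icc 1 (r - 1),
      (t : ℤ) ^ 2 * ch (r : ℤ) ((t : ℤ) + 1) * ch ((c : ℤ) - r) ((x : ℤ) - t - 1)
    = (r : ℤ) * ((r : ℤ) - 1) * ch ((c : ℤ) - 2) ((x : ℤ) - 2)
      - (r : ℤ) * ch ((c : ℤ) - 1) ((x : ℤ) - 1)
      - ch ((c : ℤ) - r) (x : ℤ) + ch (c : ℤ) (x : ℤ) :=
  sum_sq_choose_identity_general r c x hrc
end

section
/- For integers 0 ≤ 2r ≤ c and 0 ≤ x ≤ c, the double sum ∑_{t=2}^{r} ∑_{u=2}^{r} (t−1)(u−1)·C(r,t)·C(r,u)·C(c−2r, x−t−u) equals r²·C(c−2, x−2) − 2r·C(c−1, x−1) + C(c, x) − 2·C(c−r, x) + 2r·C(c−r−1, x−1) + C(c−2r, x). -/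
open Polynomial

lemma ch_natCast_s2 (n k : ℕ) : ch n k = n.choose k := by
  unfold ch
  split_ifs with h
  · simp
  · rw [Nat.choose_eq_zero_of_lt (by omega), Nat.cast_zero]

lemma coeff_X_pow_mul_one_add_X_pow (j n x : ℕ) :
    (X ^ j * (1 + X) ^ n : ℤ[X]).coeff x = ch n ((x : ℤ) - j) := by
  rw [coeff_X_pow_mul', coeff_one_add_X_pow]
  split_ifs with h
  · rw [← Nat.cast_sub h, ch_natCast_s2]
  · unfold ch
    rw [if_neg (by omega)]

lemma coeff_sum_mul_sum_mul_one_add_X_pow (s t : Finset ℕ) (a b : ℕ → ℤ) (m x : ℕ) :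
    ((∑ i ∈ s, C (a i) * X ^ i) * (∑ j ∈ t, C (b j) * X ^ j) * (1 + X) ^ m).coeff x
      = ∑ i ∈ s, ∑ j ∈ t, a i * b j * ch m ((x : ℤ) - i - j) := by
  rw [Finset.sum_mul_sum]
  simp only [Finset.sum_mul, finsetSum_coeff]
  refine Finset.sum_congr rfl fun i _ => Finset.sum_congr rfl fun j _ => ?_
  have h : C (a i) * X ^ i * (C (b j) * X ^ j) * (1 + X) ^ m
      = C (a i * b j) * (X ^ (i + j) * (1 + X) ^ m) := by
    rw [C_mul, pow_add]; ring
  rw [h, coeff_C_mul, coeff_X_pow_mul_one_add_X_pow, Nat.cast_add, sub_add_eq_sub_sub]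

lemma sum_Icc_two_sub_one_mul_choose_mul_X_pow (r : ℕ) :
    ∑ t ∈ Finset.Icc 2 (r + 1), C (((t : ℤ) - 1) * (r + 1).choose t) * X ^ t
      = C ((r : ℤ) + 1) * X * (1 + X) ^ r + 1 - (1 + X) ^ (r + 1) := by
  ext t
  simp only [finsetSum_coeff, coeff_C_mul_X_pow, Finset.sum_ite_eq, Finset.mem_Icc,
    coeff_add, coeff_sub, coeff_one_add_X_pow, coeff_one]
  rw [mul_assoc, coeff_C_mul]
  rcases t with _ | _ | t
  · simp
  · simp [coeff_X_mul, coeff_one_add_X_pow]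
  · have h : ((r : ℤ) + 1) * r.choose (t + 1) = (r + 1).choose (t + 2) * ((t : ℤ) + 2) := by
      exact_mod_cast Nat.add_one_mul_choose_eq r (t + 1)
    rw [coeff_X_mul, coeff_one_add_X_pow, if_neg (Nat.add_one_ne_zero _), add_zero]
    split_ifs with hmem
    · push_cast; linear_combination -h
    · rw [Nat.choose_eq_zero_of_lt (by omega), Nat.choose_eq_zero_of_lt (by omega)]
      simp

theorem double_sum_choose_identity_general (r c x : ℕ) (hrc : 2 * r ≤ c) :
    ∑ t ∈ Finset.Icc 2 r, ∑ u ∈ Finset.Icc 2 r,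
      ((t : ℤ) - 1) * ((u : ℤ) - 1) * ch (r : ℤ) (t : ℤ) * ch (r : ℤ) (u : ℤ)
        * ch ((c : ℤ) - 2 * r) ((x : ℤ) - t - u)
    = (r : ℤ) ^ 2 * ch ((c : ℤ) - 2) ((x : ℤ) - 2)
      - 2 * (r : ℤ) * ch ((c : ℤ) - 1) ((x : ℤ) - 1)
      + ch (c : ℤ) (x : ℤ)
      - 2 * ch ((c : ℤ) - r) (x : ℤ)
      + 2 * (r : ℤ) * ch ((c : ℤ) - r - 1) ((x : ℤ) - 1)
      + ch ((c : ℤ) - 2 * r) (x : ℤ) := by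
  obtain _ | s := r
  · rw [Finset.Icc_eq_empty (by norm_num), Finset.sum_empty]
    simp only [Nat.cast_zero, mul_zero, sub_zero]
    ring
  obtain ⟨m, rfl⟩ : ∃ m, c = m + 2 * (s + 1) := ⟨c - 2 * (s + 1), by omega⟩
  have hm : ((m + 2 * (s + 1) : ℕ) : ℤ) - 2 * (s + 1 : ℕ) = m := by push_cast; ring
  let P : ℤ[X] := ∑ t ∈ Finset.Icc 2 (s + 1), C (((t : ℤ) - 1) * (s + 1).choose t) * X ^ t
  have hexpand : P * P * (1 + X) ^ m
      = C (((s : ℤ) + 1) ^ 2) * (X ^ 2 * (1 + X) ^ (m + 2 * s))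
        - C (2 * ((s : ℤ) + 1)) * (X ^ 1 * (1 + X) ^ (m + 2 * s + 1))
        + X ^ 0 * (1 + X) ^ (m + 2 * s + 2)
        - C 2 * (X ^ 0 * (1 + X) ^ (m + s + 1))
        + C (2 * ((s : ℤ) + 1)) * (X ^ 1 * (1 + X) ^ (m + s))
        + X ^ 0 * (1 + X) ^ m := by
    simp only [P, sum_Icc_two_sub_one_mul_choose_mul_X_pow, map_mul, map_pow, map_ofNat]
    ring
  calc _ = (P * P * (1 + X) ^ m).coeff x := by
        rw [coeff_sum_mul_sum_mul_one_add_X_pow, hm]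
        refine Finset.sum_congr rfl fun t _ => Finset.sum_congr rfl fun u _ => ?_
        rw [ch_natCast_s2, ch_natCast_s2]
        ring
    _ = _ := by
        rw [hexpand]
        simp only [coeff_add, coeff_sub, coeff_C_mul, coeff_X_pow_mul_one_add_X_pow]
        push_cast
        ring_nf

/-- For `0 ≤ 2r ≤ c` and `0 ≤ x ≤ c`, the double sum
`∑_{t=2}^{r} ∑_{u=2}^{r} (t-1)(u-1)·C(r,t)·C(r,u)·C(c-2r,x-t-u)` equals
`r²·C(c-2,x-2) - 2r·C(c-1,x-1) + C(c,x) - 2·C(c-r,x) + 2r·C(c-r-1,x-1) + C(c-2r,x)`. -/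
theorem double_sum_choose_identity (r c x : ℕ) (hrc : 2 * r ≤ c) (hxc : x ≤ c) :
    ∑ t ∈ Finset.Icc 2 r, ∑ u ∈ Finset.Icc 2 r,
      ((t : ℤ) - 1) * ((u : ℤ) - 1) * ch (r : ℤ) (t : ℤ) * ch (r : ℤ) (u : ℤ)
        * ch ((c : ℤ) - 2 * r) ((x : ℤ) - t - u)
    = (r : ℤ) ^ 2 * ch ((c : ℤ) - 2) ((x : ℤ) - 2)
      - 2 * (r : ℤ) * ch ((c : ℤ) - 1) ((x : ℤ) - 1)
      + ch (c : ℤ) (x : ℤ)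
      - 2 * ch ((c : ℤ) - r) (x : ℤ)
      + 2 * (r : ℤ) * ch ((c : ℤ) - r - 1) ((x : ℤ) - 1)
      + ch ((c : ℤ) - 2 * r) (x : ℤ) :=
  double_sum_choose_identity_general r c x hrc
end

section
/- In a balanced (n,k,r,c) assignment D, for any fixed job a_i, the sum over all x-element subsets Ŝ of the c servers of max(n_{i,Ŝ} − 1, 0), where n_{i,Ŝ} is the number of servers in Ŝ assigned job a_i, equals r·C(c−1, x−1) + C(c−r, x) − C(c, x). -/
/-- A balanced `(n,k,r,c)` assignment: each of the `n` jobs is assigned to exactly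
`r` of the `c` servers, and each server is assigned exactly `k` jobs. -/
structure BalancedAssignment (n k r c : ℕ) where
  assign : Fin n → Finset (Fin c)
  job_deg : ∀ i : Fin n, (assign i).card = r
  server_deg : ∀ s : Fin c,
    (Finset.univ.filter (fun i : Fin n => s ∈ assign i)).card = k

open Finset

section PowersetCard

variable {α : Type*} [DecidableEq α] {A t : Finset α} {n : ℕ}

lemma card_filter_mem_powersetCard {a : α} (ha : a ∈ t) (hn : 1 ≤ n) :
    #{S ∈ t.powersetCard n | a ∈ S} = (#t - 1).choose (n - 1) := by
  simpa only [singleton_subset_iff, card_singleton] using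
    card_filter_powersetCard_subset {a} t n (singleton_subset_iff.2 ha) (by simpa using hn)

lemma sum_card_inter_powersetCard (hA : A ⊆ t) (hn : 1 ≤ n) :
    ∑ S ∈ t.powersetCard n, #(A ∩ S) = #A * (#t - 1).choose (n - 1) :=
  sum_card_inter fun _ ha ↦ card_filter_mem_powersetCard (hA ha) hn

lemma filter_disjoint_powersetCard (A t : Finset α) (n : ℕ) :
    {S ∈ t.powersetCard n | Disjoint A S} = (t \ A).powersetCard n := by
  ext S
  simp only [mem_filter, mem_powersetCard, subset_sdiff]
  tauto

lemma card_filter_disjoint_powersetCard (hA : A ⊆ t) :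
    #{S ∈ t.powersetCard n | Disjoint A S} = (#t - #A).choose n := by
  rw [filter_disjoint_powersetCard, card_powersetCard, card_sdiff_of_subset hA]

theorem sum_card_inter_sub_one_powersetCard (hA : A ⊆ t) (hn : 1 ≤ n) :
    ∑ S ∈ t.powersetCard n, ((#(A ∩ S) - 1 : ℕ) : ℤ)
      = #A * (#t - 1).choose (n - 1) + (#t - #A).choose n - (#t).choose n := by
  have truncated_pred (m : ℕ) : ((m - 1 : ℕ) : ℤ) = m - 1 + if m = 0 then 1 else 0 := by
    split_ifs <;> omega
  simp_rw [truncated_pred, card_eq_zero, ← disjoint_iff_inter_eq_empty, sum_add_distrib,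
    sum_sub_distrib, sum_boole, card_filter_disjoint_powersetCard hA, ← Nat.cast_sum,
    sum_card_inter_powersetCard hA hn, sum_const, card_powersetCard]
  push_cast
  ring

end PowersetCard

/-- In a balanced `(n,k,r,c)` assignment, for any fixed job `i`, the sum over
all `x`-element subsets `Ŝ` of the servers of `max(n_{i,Ŝ} - 1, 0)` equals
`r·C(c-1,x-1) + C(c-r,x) - C(c,x)`. -/
theorem sum_excess_single_job (n k r c x : ℕ) (hx1 : 1 ≤ x) (hxc : x ≤ c)
    (D : BalancedAssignment n k r c) (i : Fin n) :
    ∑ S ∈ Finset.powersetCard x (Finset.univ : Finset (Fin c)),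
        (((D.assign i ∩ S).card - 1 : ℕ) : ℤ)
      = (r : ℤ) * ch ((c : ℤ) - 1) ((x : ℤ) - 1) + ch ((c : ℤ) - r) (x : ℤ)
        - ch (c : ℤ) (x : ℤ) := by
  have hr : r ≤ c := by simpa [D.job_deg i] using card_le_univ (D.assign i)
  rw [sum_card_inter_sub_one_powersetCard (subset_univ _) hx1, D.job_deg i, card_univ,
    Fintype.card_fin, show (c : ℤ) - 1 = ((c - 1 : ℕ) : ℤ) by omega,
    show (x : ℤ) - 1 = ((x - 1 : ℕ) : ℤ) by omega, show (c : ℤ) - r = ((c - r : ℕ) : ℤ) by omega,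
    ch_natCast, ch_natCast, ch_natCast]
end

section
/- Let H be the 2×(r+1) matrix with first row all ones and second row (0,1,2,…,r). Let v ∈ ker H with integer entries such that v(i) ≥ 0 for all indices i except possibly i = ℓ+1 and i = ℓ+2 (1-indexed). Write v = ∑_{i=1}^{r−1} α_i h_i where h_i is the vector with entries 1, −2, 1 in positions i, i+1, i+2 and 0 elsewhere. Then all coefficients α_i are nonnegative. -/
/-!
Pairing `v = ∑ αₘ hₘ` against the weights `i + 1 - j` on `0, …, i` or `j - i - 1` on `i + 2, …, r`
kills every `hₘ` except `hᵢ`, which it sends to `1`. So `αᵢ` is a nonnegative combination of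
`v 0, …, v i` and also of `v (i + 2), …, v r`. One of these two ranges avoids `ℓ` and `ℓ + 1`.
-/

/-- The `i`-th basis vector of the kernel of `H` (0-indexed): entries `1, -2, 1`
at positions `i, i+1, i+2` and `0` elsewhere. -/
def basisVec (i j : ℕ) : ℤ :=
  if j = i then 1 else if j = i + 1 then -2 else if j = i + 2 then 1 else 0

open Finset

lemma basisVec_eq_sum_ite (m j : ℕ) :
    basisVec m j =
      (if j = m then 1 else 0) + (if j = m + 1 then -2 else 0) + (if j = m + 2 then 1 else 0) := by
  unfold basisVec
  split_ifs <;> omega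

lemma sum_lowerWeight_mul_basisVec (i m : ℕ) :
    ∑ j ∈ range (i + 1), ((i : ℤ) + 1 - j) * basisVec m j = if m = i then 1 else 0 := by
  simp only [basisVec_eq_sum_ite, mul_add, sum_add_distrib, mul_ite, mul_zero, sum_ite_eq',
    mem_range]
  split_ifs <;> push_cast <;> omega

lemma sum_upperWeight_mul_basisVec {n : ℕ} (i : ℕ) {m : ℕ} (hm : m < n) :
    ∑ j ∈ Ico (i + 2) (n + 2), ((j : ℤ) - i - 1) * basisVec m j = if m = i then 1 else 0 := by
  simp only [basisVec_eq_sum_ite, mul_add, sum_add_distrib, mul_ite, mul_zero, sum_ite_eq',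
    mem_Ico]
  split_ifs <;> push_cast <;> omega

lemma coeff_eq_sum_of_dual {n i : ℕ} {b : ℕ → ℕ → ℤ} {v α c : ℕ → ℤ} {s : Finset ℕ}
    (hv : ∀ j, v j = ∑ m ∈ range n, α m * b m j) (hi : i < n)
    (hc : ∀ m < n, ∑ j ∈ s, c j * b m j = if m = i then 1 else 0) :
    α i = ∑ j ∈ s, c j * v j := by
  calc α i = ∑ m ∈ range n, α m * if m = i then 1 else 0 := by simp [hi]
    _ = ∑ m ∈ range n, α m * ∑ j ∈ s, c j * b m j :=
        sum_congr rfl fun m hm => by rw [hc m (mem_range.mp hm)]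
    _ = ∑ j ∈ s, c j * v j := by
        simp only [hv, mul_sum]
        rw [sum_comm]
        exact sum_congr rfl fun _ _ => sum_congr rfl fun _ _ => by ring

section

variable {n i : ℕ} {v α : ℕ → ℤ}

lemma coeff_eq_sum_lower (hv : ∀ j, v j = ∑ m ∈ range n, α m * basisVec m j) (hi : i < n) :
    α i = ∑ j ∈ range (i + 1), ((i : ℤ) + 1 - j) * v j :=
  coeff_eq_sum_of_dual hv hi fun m _ => sum_lowerWeight_mul_basisVec i m

lemma coeff_eq_sum_upper (hv : ∀ j, v j = ∑ m ∈ range n, α m * basisVec m j) (hi : i < n) :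
    α i = ∑ j ∈ Ico (i + 2) (n + 2), ((j : ℤ) - i - 1) * v j :=
  coeff_eq_sum_of_dual hv hi fun _ hm => sum_upperWeight_mul_basisVec i hm

end

theorem kernel_coeffs_nonneg_general (r : ℕ) (ℓ : ℕ)
    (v α : ℕ → ℤ)
    (hv : ∀ j, v j = ∑ i ∈ Finset.range (r - 1), α i * basisVec i j)
    (hnonneg : ∀ j, j ≤ r → j ≠ ℓ → j ≠ ℓ + 1 → 0 ≤ v j) :
    ∀ i, i < r - 1 → 0 ≤ α i := by
  intro i hi
  rcases le_or_gt (i + 1) ℓ with hℓ | hℓ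
  · rw [coeff_eq_sum_lower hv hi]
    refine sum_nonneg fun j hj => mul_nonneg ?_ (hnonneg j ?_ ?_ ?_) <;>
      simp only [mem_range] at hj <;> omega
  · rw [coeff_eq_sum_upper hv hi]
    refine sum_nonneg fun j hj => mul_nonneg ?_ (hnonneg j ?_ ?_ ?_) <;>
      simp only [mem_Ico] at hj <;> omega

/-- Let `v ∈ ℤ^{r+1}` (indexed `0,…,r`) be in the kernel of `H`, written as
`v = ∑ α_i h_i` in the basis `h_i = (…,1,-2,1,…)`, and suppose `v(j) ≥ 0` for
all indices `j` except possibly `j = ℓ` and `j = ℓ+1` (0-indexed). Then all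
coefficients `α_i` are nonnegative. -/
theorem kernel_coeffs_nonneg (r : ℕ) (hr : 2 ≤ r) (ℓ : ℕ) (hℓ : ℓ ≤ r - 1)
    (v α : ℕ → ℤ)
    (hv : ∀ j, v j = ∑ i ∈ Finset.range (r - 1), α i * basisVec i j)
    (hnonneg : ∀ j, j ≤ r → j ≠ ℓ → j ≠ ℓ + 1 → 0 ≤ v j) :
    ∀ i, i < r - 1 → 0 ≤ α i :=
  kernel_coeffs_nonneg_general r ℓ v α hv hnonneg
end

section
/- Let H be the 2×(r+1) matrix with first row all ones and second row (0,1,…,r). Let v ∈ ker H be a nonzero integer vector with v(i) ≥ 0 for all 1 < i < r+1 (so only the first and last entries may be negative). Write v = ∑_{i=1}^{r−1} α_i h_i in the basis where h_i has entries 1,−2,1 at positions i,i+1,i+2. Then all α_i ≤ 0, and moreover α_1 ≤ α_2/2 ≤ α_3/3 ≤ ⋯ ≤ α_{r−1}/(r−1) ≤ 0. -/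
section ConvexSequence

variable {R : Type*} [CommRing R] [LinearOrder R] [IsStrictOrderedRing R] {f : ℕ → R} {n : ℕ}

theorem succ_mul_le_mul_succ_of_convex (h0 : f 0 = 0)
    (hconv : ∀ j, j + 2 ≤ n → 2 * f (j + 1) ≤ f j + f (j + 2)) :
    ∀ m, m + 1 ≤ n → ((m : R) + 1) * f m ≤ m * f (m + 1) := by
  intro m
  induction m with
  | zero => simp [h0]
  | succ m ih =>
    intro hm
    have hprev := ih (by omega)
    have hscaled := mul_le_mul_of_nonneg_left (hconv m hm) (by positivity : (0 : R) ≤ m + 1)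
    push_cast
    linarith

theorem nonpos_of_convex (h0 : f 0 = 0) (hn : f n = 0)
    (hconv : ∀ j, j + 2 ≤ n → 2 * f (j + 1) ≤ f j + f (j + 2)) :
    ∀ m, m ≤ n → f m ≤ 0 := by
  intro m hm
  induction hm using Nat.decreasingInduction with
  | self => exact hn.le
  | of_succ k hk ih =>
    have hchain := succ_mul_le_mul_succ_of_convex h0 hconv k hk
    have hright : (k : R) * f (k + 1) ≤ 0 := mul_nonpos_of_nonneg_of_nonpos k.cast_nonneg ih
    nlinarith [(by positivity : (0 : R) < k + 1)]

end ConvexSequence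

def padCoeffs (α : ℕ → ℤ) (n : ℕ) : ℕ → ℤ
  | 0 => 0
  | k + 1 => if k < n then α k else 0

theorem sum_mul_basisVec_succ (α : ℕ → ℤ) (n j : ℕ) :
    ∑ i ∈ Finset.range n, α i * basisVec i (j + 1) =
      padCoeffs α n j - 2 * padCoeffs α n (j + 1) + padCoeffs α n (j + 2) := by
  have hterm : ∀ i, α i * basisVec i (j + 1) =
      (if i + 1 = j then α i else 0) - 2 * (if i = j then α i else 0)
        + (if i = j + 1 then α i else 0) := by
    intro i
    unfold basisVec
    split_ifs <;> first | ring1 | omega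
  simp only [hterm, Finset.sum_add_distrib, Finset.sum_sub_distrib, ← Finset.mul_sum,
    Finset.sum_ite_eq', Finset.mem_range, padCoeffs]
  cases j <;> simp

theorem kernel_coeffs_nonpos_chain_general (r : ℕ) (v α : ℕ → ℤ)
    (hv : ∀ j, v j = ∑ i ∈ Finset.range (r - 1), α i * basisVec i j)
    (hnonneg : ∀ j, 0 < j → j < r → 0 ≤ v j) :
    (∀ i, i < r - 1 → α i ≤ 0)
      ∧ (∀ i, i + 1 < r - 1 → ((i : ℤ) + 2) * α i ≤ ((i : ℤ) + 1) * α (i + 1)) := by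
  set f := padCoeffs α (r - 1)
  have hf : ∀ i, i < r - 1 → f (i + 1) = α i := fun i hi => if_pos hi
  have hf_last : f r = 0 := by cases r <;> simp [f, padCoeffs]
  have hconv : ∀ j, j + 2 ≤ r → 2 * f (j + 1) ≤ f j + f (j + 2) := by
    intro j hj
    have hvj := hnonneg (j + 1) j.succ_pos (by omega)
    rw [hv, sum_mul_basisVec_succ] at hvj
    linarith
  refine ⟨fun i hi => ?_, fun i hi => ?_⟩
  · rw [← hf i hi]
    exact nonpos_of_convex rfl hf_last hconv (i + 1) (by omega)
  · have hslope := succ_mul_le_mul_succ_of_convex rfl hconv (i + 1) (by omega)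
    rw [hf i (by omega), hf (i + 1) hi] at hslope
    push_cast at hslope
    linarith

/-- Let `v ∈ ℤ^{r+1}` (indexed `0,…,r`) be a nonzero kernel vector of `H`,
written `v = ∑ α_i h_i`, whose interior entries are nonnegative (only the first
and last entries may be negative). Then all `α_i ≤ 0`, and moreover
`α_1 ≤ α_2/2 ≤ ⋯ ≤ α_{r-1}/(r-1) ≤ 0` (here stated with 0-indexed `α`, i.e.
`(i+2)·α_i ≤ (i+1)·α_{i+1}`). -/
theorem kernel_coeffs_nonpos_chain (r : ℕ) (hr : 2 ≤ r) (v α : ℕ → ℤ)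
    (hv : ∀ j, v j = ∑ i ∈ Finset.range (r - 1), α i * basisVec i j)
    (hvne : ∃ j, j ≤ r ∧ v j ≠ 0)
    (hnonneg : ∀ j, 0 < j → j < r → 0 ≤ v j) :
    (∀ i, i < r - 1 → α i ≤ 0)
      ∧ (∀ i, i + 1 < r - 1 → ((i : ℤ) + 2) * α i ≤ ((i : ℤ) + 1) * α (i + 1)) :=
  kernel_coeffs_nonpos_chain_general r v α hv hnonneg
end

section
/- If a proximally compact balanced (n,k,r,c) assignment D exists, then for every x with 1 ≤ x ≤ c and every balanced (n,k,r,c) assignment D₁: ∑_{m=0}^{r} m^{D₁}(m)·g(m,x) ≥ ∑_{m=0}^{r} m^{D}(m)·g(m,x). Consequently D minimizes the variance of the number of distinct jobs received among all balanced (n,k,r,c) assignments. -/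
/-- `pairCount D m` : the number of unordered pairs of distinct jobs that are
assigned together to exactly `m` common servers. -/
def pairCount {n k r c : ℕ} (D : BalancedAssignment n k r c) (m : ℕ) : ℕ :=
  (Finset.univ.filter (fun p : Fin n × Fin n =>
    p.1 < p.2 ∧ (D.assign p.1 ∩ D.assign p.2).card = m)).card
/-- The number of distinct jobs assigned to some server in the subset `S`. -/
def numDistinct {n k r c : ℕ} (D : BalancedAssignment n k r c)
    (S : Finset (Fin c)) : ℕ :=
  (Finset.univ.filter (fun i : Fin n => (D.assign i ∩ S).Nonempty)).card
/-- `gval c r m x` : the value of `g(m,x)`, the sum over `x`-subsets of the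
servers of `max(n_i - 1, 0) * max(n_j - 1, 0)` for a pair of jobs, each on `r`
of the `c` servers, sharing exactly `m` servers.  It is given by the closed
form `g(0,x)` together with the recursion for the difference `g(m+1,x)-g(m,x)`. -/
def gval (c r m x : ℕ) : ℤ :=
  (r : ℤ) ^ 2 * ch ((c : ℤ) - 2) ((x : ℤ) - 2)
    - 2 * r * ch ((c : ℤ) - 1) ((x : ℤ) - 1)
    + ch (c : ℤ) (x : ℤ)
    - 2 * ch ((c : ℤ) - r) (x : ℤ)
    + 2 * r * ch ((c : ℤ) - r - 1) ((x : ℤ) - 1)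
    + ch ((c : ℤ) - 2 * r) (x : ℤ)
  + ∑ j ∈ Finset.range m,
      (ch ((c : ℤ) - 2) ((x : ℤ) - 1) - 2 * ch ((c : ℤ) - r - 1) ((x : ℤ) - 1)
        + ch ((c : ℤ) - 2 * r + j) ((x : ℤ) - 1))
/-- Mean of the number of distinct jobs received when a uniformly random
`x`-subset of the `c` servers communicates with the master. -/
noncomputable def meanDistinct {n k r c : ℕ} (D : BalancedAssignment n k r c)
    (x : ℕ) : ℚ :=
  (∑ S ∈ Finset.powersetCard x (Finset.univ : Finset (Fin c)),
    (numDistinct D S : ℚ)) / (c.choose x)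

/-- Variance of the number of distinct jobs received when a uniformly random
`x`-subset of the `c` servers communicates with the master. -/
noncomputable def varDistinct {n k r c : ℕ} (D : BalancedAssignment n k r c)
    (x : ℕ) : ℚ :=
  (∑ S ∈ Finset.powersetCard x (Finset.univ : Finset (Fin c)),
    ((numDistinct D S : ℚ) - meanDistinct D x) ^ 2) / (c.choose x)

/-!
Both `g(·, x)` and `m ↦ C(c - 2r + m, x)` are discretely convex in `m`: their increments
`C(c-2, x-1) - 2 C(c-r-1, x-1) + C(c-2r+m, x-1)` and `C(c-2r+m, x-1)` grow with `m`.
For every balanced assignment the pair counts `m^D(m)` have the same total `C(n, 2)` and, by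
double counting pairs of jobs on a common server, the same first moment:
`2 ∑ m·m^D(m) = c (k² - k)`. Among nonnegative weights with prescribed zeroth and first moment,
one supported on two consecutive points `ℓ, ℓ + 1` minimises the weighted sum of a convex `f`:
the chord of `f` through `ℓ` and `ℓ + 1` agrees with `f` there, lies below `f` everywhere, and
its weighted sum only sees the two moments.

For the variance, the number of jobs received from `S` is `n - Z(S)`, where `Z(S)` counts the
jobs all of whose servers avoid `S`. Summing over `x`-subsets, `∑ Z = n C(c-r, x)` and
`∑ Z² = ∑ Z + 2 ∑_{i<j} C(c - |A_i ∪ A_j|, x) = ∑ Z + 2 ∑_m m^D(m) C(c-2r+m, x)`, so the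
variance is an increasing affine function of the second convex sum.
-/

open Finset

lemma ch_add_one_left (a b : ℤ) (hb : 1 ≤ b) : ch (a + 1) b = ch a b + ch a (b - 1) := by
  obtain ⟨b, rfl⟩ : ∃ b' : ℕ, b = b' + 1 := ⟨(b - 1).toNat, by omega⟩
  rcases lt_or_ge a 0 with ha | ha
  · simp only [ch]
    split_ifs <;> omega
  · lift a to ℕ using ha
    rw [add_sub_cancel_right, ← Nat.cast_succ, ← Nat.cast_succ, ch_natCast, ch_natCast,
      ch_natCast, Nat.choose_succ_succ, Nat.cast_add, add_comm]

lemma ch_mono_left {a a' : ℤ} (b : ℤ) (h : a ≤ a') : ch a b ≤ ch a' b := by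
  unfold ch
  split_ifs
  · exact_mod_cast Nat.choose_le_choose _ (by omega)
  · omega
  · exact Nat.cast_nonneg _
  · rfl

lemma monotone_ch_add_succ_sub (a : ℤ) {x : ℕ} (hx : 1 ≤ x) :
    Monotone fun m : ℕ => ch (a + (m + 1 : ℕ)) x - ch (a + m) x := by
  have hstep (m : ℕ) : ch (a + (m + 1 : ℕ)) x - ch (a + m) x = ch (a + m) (x - 1) := by
    rw [Nat.cast_succ, ← add_assoc, ch_add_one_left _ _ (by omega), add_sub_cancel_left]
  intro i j hij
  simp only [hstep]
  exact ch_mono_left _ (by omega)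

lemma monotone_gval_succ_sub (c r x : ℕ) :
    Monotone fun m => gval c r (m + 1) x - gval c r m x := by
  have hstep (m : ℕ) : gval c r (m + 1) x - gval c r m x
      = ch ((c : ℤ) - 2) ((x : ℤ) - 1) - 2 * ch ((c : ℤ) - r - 1) ((x : ℤ) - 1)
        + ch ((c : ℤ) - 2 * r + m) ((x : ℤ) - 1) := by
    rw [gval, gval, sum_range_succ]
    ring
  intro i j hij
  simp only [hstep]
  gcongr
  exact ch_mono_left _ (by omega)

section Exchange

variable {f : ℕ → ℤ}

lemma chord_le_of_monotone_succ_sub (hf : Monotone fun i => f (i + 1) - f i) (ℓ m : ℕ) :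
    f ℓ + ((m : ℤ) - ℓ) * (f (ℓ + 1) - f ℓ) ≤ f m := by
  rcases le_total ℓ m with h | h
  · induction m, h using Nat.le_induction with
    | base => simp
    | succ m hm ih =>
      have := hf hm
      push_cast
      linarith
  · have hbelow : ∀ L, m ≤ L → f L - f m ≤ ((L : ℤ) - m) * (f (L + 1) - f L) := by
      intro L hL
      induction L, hL using Nat.le_induction with
      | base => simp
      | succ L hL ih =>
        have hΔ : f (L + 1) - f L ≤ f (L + 1 + 1) - f (L + 1) := hf (Nat.le_succ L)
        have hmono := mul_le_mul_of_nonneg_left hΔ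
          (sub_nonneg.2 (Nat.cast_le.2 hL) : (0 : ℤ) ≤ L - m)
        push_cast
        linarith
    linarith [hbelow ℓ h]

lemma sum_mul_le_sum_mul_of_moments_eq (hf : Monotone fun i => f (i + 1) - f i)
    {s : Finset ℕ} {p q : ℕ → ℕ} (h₀ : ∑ m ∈ s, p m = ∑ m ∈ s, q m)
    (h₁ : ∑ m ∈ s, m * p m = ∑ m ∈ s, m * q m) {ℓ : ℕ}
    (hp : ∀ m, p m ≠ 0 → m = ℓ ∨ m = ℓ + 1) :
    ∑ m ∈ s, (p m : ℤ) * f m ≤ ∑ m ∈ s, (q m : ℤ) * f m := by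
  set L : ℕ → ℤ := fun m => f ℓ + ((m : ℤ) - ℓ) * (f (ℓ + 1) - f ℓ)
  have hpL (m : ℕ) : (p m : ℤ) * f m = p m * L m := by
    rcases eq_or_ne (p m) 0 with h | h
    · simp [h]
    · rcases hp m h with rfl | rfl <;> simp [L]
  have hL (w : ℕ → ℕ) : ∑ m ∈ s, (w m : ℤ) * L m
      = (f ℓ - ℓ * (f (ℓ + 1) - f ℓ)) * ∑ m ∈ s, (w m : ℤ)
        + (f (ℓ + 1) - f ℓ) * ∑ m ∈ s, ((m * w m : ℕ) : ℤ) := by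
    simp only [mul_sum, ← sum_add_distrib]
    refine sum_congr rfl fun m _ => ?_
    push_cast
    ring
  calc ∑ m ∈ s, (p m : ℤ) * f m = ∑ m ∈ s, (p m : ℤ) * L m := sum_congr rfl fun m _ => hpL m
    _ = ∑ m ∈ s, (q m : ℤ) * L m := by
      rw [hL, hL, ← Nat.cast_sum, ← Nat.cast_sum, ← Nat.cast_sum, ← Nat.cast_sum, h₀, h₁]
    _ ≤ ∑ m ∈ s, (q m : ℤ) * f m := sum_le_sum fun m _ =>
      mul_le_mul_of_nonneg_left (chord_le_of_monotone_succ_sub hf ℓ m) (by positivity)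

end Exchange

section Pairs

variable {ι : Type*} [Fintype ι] [LinearOrder ι]

def ltPairs (ι : Type*) [Fintype ι] [LinearOrder ι] : Finset (ι × ι) :=
  univ.filter fun p => p.1 < p.2

lemma sq_sum_eq_sum_sq_add_two_mul_sum_ltPairs {R : Type*} [CommSemiring R] (g : ι → R) :
    (∑ i, g i) ^ 2 = ∑ i, g i ^ 2 + 2 * ∑ p ∈ ltPairs ι, g p.1 * g p.2 := by
  have hsplit (i j : ι) : g i * g j = (if i = j then g i ^ 2 else 0)
      + (if i < j then g i * g j else 0) + (if j < i then g j * g i else 0) := by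
    rcases lt_trichotomy i j with h | rfl | h
    · simp [h, h.ne, h.not_gt]
    · simp [sq]
    · simp [h, h.ne', h.not_gt, mul_comm]
  calc (∑ i, g i) ^ 2 = ∑ i, ∑ j, g i * g j := by rw [sq, Fintype.sum_mul_sum]
    _ = ∑ i, ∑ j, ((if i = j then g i ^ 2 else 0) + (if i < j then g i * g j else 0)
          + (if j < i then g j * g i else 0)) :=
      sum_congr rfl fun i _ => sum_congr rfl fun j _ => hsplit i j
    _ = _ := by
      simp only [sum_add_distrib, sum_ite_eq, mem_univ, if_true]
      rw [sum_comm (f := fun i j => if j < i then g j * g i else 0), ltPairs, sum_filter,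
        Fintype.sum_prod_type]
      ring

lemma card_sq_eq_card_add_two_mul_card_ltPairs (B : Finset ι) :
    #B ^ 2 = #B + 2 * #{p ∈ ltPairs ι | p.1 ∈ B ∧ p.2 ∈ B} := by
  have := sq_sum_eq_sum_sq_add_two_mul_sum_ltPairs fun i => if i ∈ B then 1 else 0
  simpa [sum_boole, ← ite_and, and_comm] using this

end Pairs

lemma card_filter_disjoint_powersetCard_s16 {α : Type*} [Fintype α] [DecidableEq α]
    (t : Finset α) (x : ℕ) :
    #{S ∈ powersetCard x (univ : Finset α) | Disjoint t S} = (Fintype.card α - #t).choose x := by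
  have : {S ∈ powersetCard x (univ : Finset α) | Disjoint t S} = powersetCard x tᶜ := by
    ext S
    simp [subset_compl_iff_disjoint_left, and_comm]
  rw [this, card_powersetCard, card_compl]

lemma sum_sq_sub_average_const_sub {α K : Type*} [Field K] [CharZero K] (T : Finset α) (a : K)
    (f : α → K) :
    ∑ t ∈ T, (a - f t - (∑ u ∈ T, (a - f u)) / #T) ^ 2
      = ∑ t ∈ T, f t ^ 2 - (∑ t ∈ T, f t) ^ 2 / #T := by
  rcases T.eq_empty_or_nonempty with rfl | hne
  · simp
  have hT : (#T : K) ≠ 0 := Nat.cast_ne_zero.2 hne.card_pos.ne'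
  simp only [sub_sq, sum_add_distrib, sum_sub_distrib, ← sum_mul, ← mul_sum, sum_const,
    nsmul_eq_mul]
  field_simp
  ring

section BalancedAssignment

variable {n k r c : ℕ} (D : BalancedAssignment n k r c)

lemma sum_pairCount_smul {M : Type*} [AddCommMonoid M] (w : ℕ → M) :
    ∑ m ∈ range (r + 1), pairCount D m • w m
      = ∑ p ∈ ltPairs (Fin n), w #(D.assign p.1 ∩ D.assign p.2) := by
  have hmaps : ∀ p ∈ ltPairs (Fin n), #(D.assign p.1 ∩ D.assign p.2) ∈ range (r + 1) := by
    intro p _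
    have := card_le_card (inter_subset_left (s₁ := D.assign p.1) (s₂ := D.assign p.2))
    have := D.job_deg p.1
    rw [mem_range]
    omega
  rw [← sum_fiberwise_of_maps_to hmaps]
  refine sum_congr rfl fun m _ => ?_
  rw [sum_congr rfl fun p hp => by rw [(mem_filter.1 hp).2], sum_const, pairCount, ltPairs,
    filter_filter]

lemma sum_pairCount : ∑ m ∈ range (r + 1), pairCount D m = #(ltPairs (Fin n)) := by
  rw [card_eq_sum_ones, ← sum_pairCount_smul D fun _ => 1]
  simp

lemma mul_sq_eq_mul_add_two_mul_sum_mul_pairCount :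
    c * k ^ 2 = c * k + 2 * ∑ m ∈ range (r + 1), m * pairCount D m := by
  have hserver (s : Fin c) :
      k ^ 2 = k + 2 * #{p ∈ ltPairs (Fin n) | s ∈ D.assign p.1 ∧ s ∈ D.assign p.2} := by
    simpa [D.server_deg] using
      card_sq_eq_card_add_two_mul_card_ltPairs ({i | s ∈ D.assign i} : Finset (Fin n))
  have hcount : ∑ s : Fin c, #{p ∈ ltPairs (Fin n) | s ∈ D.assign p.1 ∧ s ∈ D.assign p.2}
      = ∑ p ∈ ltPairs (Fin n), #(D.assign p.1 ∩ D.assign p.2) := by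
    simp only [← mem_inter, card_filter]
    rw [sum_comm]
    simp only [← card_filter, filter_mem_eq_inter, univ_inter]
  have hmoment : ∑ m ∈ range (r + 1), m * pairCount D m
      = ∑ p ∈ ltPairs (Fin n), #(D.assign p.1 ∩ D.assign p.2) := by
    simpa [mul_comm] using sum_pairCount_smul D fun m => m
  calc c * k ^ 2
      = ∑ s : Fin c, (k + 2 * #{p ∈ ltPairs (Fin n) | s ∈ D.assign p.1 ∧ s ∈ D.assign p.2}) := by
        simp [← hserver]
    _ = _ := by
      rw [sum_add_distrib, ← mul_sum, hcount, hmoment]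
      simp

def numMissed (S : Finset (Fin c)) : ℕ := #{i | Disjoint (D.assign i) S}

lemma numDistinct_add_numMissed (S : Finset (Fin c)) : numDistinct D S + numMissed D S = n := by
  simp only [numDistinct, numMissed, disjoint_iff_inter_eq_empty, ← not_nonempty_iff_eq_empty]
  simpa using
    card_filter_add_card_filter_not (s := univ) (p := fun i => (D.assign i ∩ S).Nonempty)

lemma sum_numMissed (x : ℕ) :
    ∑ S ∈ powersetCard x univ, numMissed D S = n * (c - r).choose x := by
  simp only [numMissed, card_filter]
  rw [sum_comm]
  simp [card_filter_disjoint_powersetCard_s16, D.job_deg]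

lemma sum_numMissed_sq (x : ℕ) :
    ∑ S ∈ powersetCard x univ, numMissed D S ^ 2
      = n * (c - r).choose x
        + 2 * ∑ p ∈ ltPairs (Fin n), (c - #(D.assign p.1 ∪ D.assign p.2)).choose x := by
  have hpairs : ∑ S ∈ powersetCard x univ,
        #{p ∈ ltPairs (Fin n) | p.1 ∈ ({i | Disjoint (D.assign i) S} : Finset (Fin n))
          ∧ p.2 ∈ ({i | Disjoint (D.assign i) S} : Finset (Fin n))}
      = ∑ p ∈ ltPairs (Fin n), (c - #(D.assign p.1 ∪ D.assign p.2)).choose x := by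
    simp only [card_filter]
    rw [sum_comm]
    refine sum_congr rfl fun p _ => ?_
    have := card_filter_disjoint_powersetCard_s16 (D.assign p.1 ∪ D.assign p.2) x
    rw [Fintype.card_fin, card_filter] at this
    simpa [disjoint_union_left] using this
  calc ∑ S ∈ powersetCard x univ, numMissed D S ^ 2
      = ∑ S ∈ powersetCard x univ, (numMissed D S + 2 * #{p ∈ ltPairs (Fin n) |
          p.1 ∈ ({i | Disjoint (D.assign i) S} : Finset (Fin n))
            ∧ p.2 ∈ ({i | Disjoint (D.assign i) S} : Finset (Fin n))}) :=
        sum_congr rfl fun S _ => card_sq_eq_card_add_two_mul_card_ltPairs _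
    _ = _ := by rw [sum_add_distrib, sum_numMissed, ← mul_sum, hpairs]

lemma sum_ltPairs_choose_eq_sum_pairCount_mul (x : ℕ) :
    ∑ p ∈ ltPairs (Fin n), ((c - #(D.assign p.1 ∪ D.assign p.2)).choose x : ℤ)
      = ∑ m ∈ range (r + 1), (pairCount D m : ℤ) * ch ((c : ℤ) - 2 * r + m) x := by
  simp only [← nsmul_eq_mul, sum_pairCount_smul]
  refine sum_congr rfl fun p _ => ?_
  have hunion := card_union_add_card_inter (D.assign p.1) (D.assign p.2)
  have hle := card_le_univ (D.assign p.1 ∪ D.assign p.2)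
  rw [D.job_deg, D.job_deg] at hunion
  rw [Fintype.card_fin] at hle
  rw [← ch_natCast, Nat.cast_sub hle]
  congr 1
  omega

lemma varDistinct_eq (x : ℕ) :
    varDistinct D x
      = ((n * (c - r).choose x : ℚ)
          + 2 * ((∑ m ∈ range (r + 1), (pairCount D m : ℤ) * ch ((c : ℤ) - 2 * r + m) x : ℤ) : ℚ)
          - (n * (c - r).choose x : ℚ) ^ 2 / c.choose x) / c.choose x := by
  have hcard : (c.choose x : ℚ) = #(powersetCard x (univ : Finset (Fin c))) := by simp
  have hdistinct (S : Finset (Fin c)) : (numDistinct D S : ℚ) = n - numMissed D S := by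
    rw [eq_sub_iff_add_eq]
    exact_mod_cast numDistinct_add_numMissed D S
  have hmissed : (∑ S ∈ powersetCard x univ, (numMissed D S : ℚ)) = n * (c - r).choose x := by
    exact_mod_cast sum_numMissed D x
  have hmissed_sq : (∑ S ∈ powersetCard x univ, (numMissed D S : ℚ) ^ 2)
      = n * (c - r).choose x + 2 * ((∑ m ∈ range (r + 1),
          (pairCount D m : ℤ) * ch ((c : ℤ) - 2 * r + m) x : ℤ) : ℚ) := by
    rw [← sum_ltPairs_choose_eq_sum_pairCount_mul]
    exact_mod_cast sum_numMissed_sq D x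
  rw [varDistinct, meanDistinct, hcard]
  simp only [hdistinct]
  rw [sum_sq_sub_average_const_sub, hmissed, hmissed_sq]

end BalancedAssignment

theorem proximally_compact_min_variance_general (n k r c : ℕ)
    (D D₁ : BalancedAssignment n k r c)
    (hprox : ∃ ℓ, ∀ m, pairCount D m ≠ 0 → m = ℓ ∨ m = ℓ + 1)
    (x : ℕ) (hx1 : 1 ≤ x) :
    (∑ m ∈ Finset.range (r + 1), (pairCount D m : ℤ) * gval c r m x
        ≤ ∑ m ∈ Finset.range (r + 1), (pairCount D₁ m : ℤ) * gval c r m x)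
      ∧ varDistinct D x ≤ varDistinct D₁ x := by
  obtain ⟨ℓ, hℓ⟩ := hprox
  have h₀ : ∑ m ∈ range (r + 1), pairCount D m = ∑ m ∈ range (r + 1), pairCount D₁ m := by
    rw [sum_pairCount, sum_pairCount]
  have h₁ :
      ∑ m ∈ range (r + 1), m * pairCount D m = ∑ m ∈ range (r + 1), m * pairCount D₁ m := by
    have := mul_sq_eq_mul_add_two_mul_sum_mul_pairCount D
    have := mul_sq_eq_mul_add_two_mul_sum_mul_pairCount D₁
    omega
  refine ⟨sum_mul_le_sum_mul_of_moments_eq (monotone_gval_succ_sub c r x) h₀ h₁ hℓ, ?_⟩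
  have hmissedPairs := sum_mul_le_sum_mul_of_moments_eq (f := fun m => ch ((c : ℤ) - 2 * r + m) x)
    (monotone_ch_add_succ_sub _ hx1) h₀ h₁ hℓ
  rw [varDistinct_eq, varDistinct_eq]
  gcongr

/-- If a proximally compact balanced `(n,k,r,c)` assignment `D` exists, then for
every `1 ≤ x ≤ c` and every balanced `(n,k,r,c)` assignment `D₁`,
`∑_m m^{D₁}(m)·g(m,x) ≥ ∑_m m^{D}(m)·g(m,x)`; consequently `D` minimizes the
variance of the number of distinct jobs received. -/
theorem proximally_compact_min_variance (n k r c : ℕ)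
    (D D₁ : BalancedAssignment n k r c)
    (hprox : ∃ ℓ, ∀ m, pairCount D m ≠ 0 → m = ℓ ∨ m = ℓ + 1)
    (x : ℕ) (hx1 : 1 ≤ x) (hxc : x ≤ c) :
    (∑ m ∈ Finset.range (r + 1), (pairCount D m : ℤ) * gval c r m x
        ≤ ∑ m ∈ Finset.range (r + 1), (pairCount D₁ m : ℤ) * gval c r m x)
      ∧ varDistinct D x ≤ varDistinct D₁ x :=
  proximally_compact_min_variance_general n k r c D D₁ hprox x hx1
end
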